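/- Let g be a continuous density strictly positive on (−m, m) with support [−m, m], and let δ(d) be the posterior mean under prior α δ₀ + (1−α) g and likelihood N(θ, σ²). Then δ(d) → m as d → +∞ and δ(d) → −m as d → −∞. -/
import Mathlib


open MeasureTheory Real
open scoped NNReal ENNReal

/-- Standard normal density. -/
noncomputable def phi (u : ℝ) : ℝ := (Real.sqrt (2 * Real.pi))⁻¹ * Real.exp (-(u ^ 2) / 2)

/-- Mixture prior `α δ₀ + (1 - α) g`. -/
noncomputable def priorMeasure (α : ℝ) (g : ℝ → ℝ) : Measure ℝ :=
  ENNReal.ofReal α • Measure.dirac 0 +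
    ENNReal.ofReal (1 - α) • volume.withDensity (fun θ => ENNReal.ofReal (g θ))

/-- Posterior mean of `θ` given `d`, under likelihood `d ∣ θ ~ N(θ, σ²)` and the
mixture prior `α δ₀ + (1 - α) g`. -/
noncomputable def postMean (α σ : ℝ) (g : ℝ → ℝ) (d : ℝ) : ℝ :=
  (∫ θ, θ * ((1 / σ) * phi ((d - θ) / σ)) ∂(priorMeasure α g)) /
    (∫ θ, (1 / σ) * phi ((d - θ) / σ) ∂(priorMeasure α g))

lemma phi_continuous : Continuous phi := by
  unfold phi; fun_prop

lemma phi_pos (u : ℝ) : 0 < phi u := by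
  unfold phi
  positivity

lemma phi_anti {x y : ℝ} (hx : 0 ≤ x) (hxy : x ≤ y) : phi y ≤ phi x := by
  unfold phi
  have h1 : Real.exp (-(y ^ 2) / 2) ≤ Real.exp (-(x ^ 2) / 2) := by
    apply Real.exp_le_exp.2; nlinarith
  have h2 : (0:ℝ) ≤ (Real.sqrt (2 * Real.pi))⁻¹ := by positivity
  exact mul_le_mul_of_nonneg_left h1 h2

lemma phi_even (x : ℝ) : phi (-x) = phi x := by
  unfold phi; ring_nf

lemma ratio_lim {σ : ℝ} (hσ : 0 < σ) {a b : ℝ} (hab : b < a) :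
    Filter.Tendsto (fun d => phi ((d - b) / σ) / phi ((d - a) / σ))
      Filter.atTop (nhds 0) := by
  have hC : ((Real.sqrt (2 * Real.pi))⁻¹ : ℝ) ≠ 0 := by positivity
  have heq : ∀ d : ℝ, phi ((d - b) / σ) / phi ((d - a) / σ)
      = Real.exp (((b - a) / σ ^ 2) * d + (a ^ 2 - b ^ 2) / (2 * σ ^ 2)) := by
    intro d
    unfold phi
    rw [mul_div_mul_left _ _ hC, ← Real.exp_sub]
    congr 1
    field_simp
    ring
  simp only [heq]
  apply Real.tendsto_exp_atBot.comp
  apply Filter.tendsto_atBot_add_const_right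
  exact Filter.Tendsto.const_mul_atTop_of_neg
    (div_neg_of_neg_of_pos (by linarith) (by positivity)) Filter.tendsto_id

section Main

variable {α σ m : ℝ} {g : ℝ → ℝ}

lemma integrable_g_mul (hgcont : Continuous g)
    (hgsupp : ∀ θ, θ ∉ Set.Icc (-m) m → g θ = 0)
    {f : ℝ → ℝ} (hf : Continuous f) :
    Integrable (fun θ => g θ * f θ) := by
  apply (hgcont.mul hf).integrable_of_hasCompactSupport
  apply HasCompactSupport.intro (isCompact_Icc (a := -m) (b := m))
  intro x hx
  simp [hgsupp x hx]

lemma prior_integral (hα0 : 0 ≤ α) (hα1 : α ≤ 1) (hgcont : Continuous g) (hgnn : ∀ θ, 0 ≤ g θ)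
    {f : ℝ → ℝ} (hf : Continuous f) (hint : Integrable (fun θ => g θ * f θ)) :
    ∫ θ, f θ ∂(priorMeasure α g) = α * f 0 + (1 - α) * ∫ θ, g θ * f θ := by
  have hgm : Measurable (fun θ => Real.toNNReal (g θ)) := hgcont.measurable.real_toNNReal
  have hdirac : Integrable f (Measure.dirac (0 : ℝ)) := by
    refine (integrable_const (f 0)).congr ?_
    rw [MeasureTheory.ae_dirac_eq]
    exact Filter.eventually_pure.2 rfl
  have hkey : (fun θ => Real.toNNReal (g θ) • f θ) = fun θ => g θ * f θ := by
    funext θ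
    simp [NNReal.smul_def, Real.coe_toNNReal _ (hgnn θ), smul_eq_mul]
  have hwd : Integrable f (volume.withDensity (fun θ => ENNReal.ofReal (g θ))) := by
    rw [show (fun θ => ENNReal.ofReal (g θ)) = (fun θ => ((Real.toNNReal (g θ) : ℝ≥0) : ℝ≥0∞))
      from rfl]
    rw [integrable_withDensity_iff_integrable_smul hgm]
    exact hkey ▸ hint
  have h1 : Integrable f (ENNReal.ofReal α • Measure.dirac (0:ℝ)) :=
    hdirac.smul_measure ENNReal.ofReal_ne_top
  have h2 : Integrable f
      (ENNReal.ofReal (1 - α) • volume.withDensity (fun θ => ENNReal.ofReal (g θ))) :=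
    hwd.smul_measure ENNReal.ofReal_ne_top
  unfold priorMeasure
  rw [integral_add_measure h1 h2, integral_smul_measure, integral_smul_measure,
    integral_dirac]
  rw [show (fun θ => ENNReal.ofReal (g θ)) = (fun θ => ((Real.toNNReal (g θ) : ℝ≥0) : ℝ≥0∞))
      from rfl]
  rw [integral_withDensity_eq_integral_smul hgm]
  simp only [smul_eq_mul, ENNReal.toReal_ofReal hα0]
  rw [ENNReal.toReal_ofReal (by linarith : (0:ℝ) ≤ 1 - α)]
  congr 1
  rw [hkey]

lemma postMean_formula (hα0 : 0 ≤ α) (hα1 : α ≤ 1) (hσ : 0 < σ)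
    (hgcont : Continuous g) (hgnn : ∀ θ, 0 ≤ g θ)
    (hgsupp : ∀ θ, θ ∉ Set.Icc (-m) m → g θ = 0) (d : ℝ) :
    postMean α σ g d =
      ((1 - α) * ∫ θ, g θ * (θ * ((1 / σ) * phi ((d - θ) / σ)))) /
        (α * ((1 / σ) * phi (d / σ)) +
          (1 - α) * ∫ θ, g θ * ((1 / σ) * phi ((d - θ) / σ))) := by
  have hKcont : Continuous fun θ : ℝ => (1 / σ) * phi ((d - θ) / σ) :=
    continuous_const.mul (phi_continuous.comp ((continuous_const.sub continuous_id).div_const σ))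
  have hc1 : Continuous fun θ : ℝ => θ * ((1 / σ) * phi ((d - θ) / σ)) :=
    continuous_id.mul hKcont
  unfold postMean
  rw [prior_integral hα0 hα1 hgcont hgnn hc1 (integrable_g_mul hgcont hgsupp hc1),
      prior_integral hα0 hα1 hgcont hgnn hKcont (integrable_g_mul hgcont hgsupp hKcont)]
  simp only [zero_mul, mul_zero, zero_add, sub_zero]

set_option maxHeartbeats 1000000 in
lemma aux_atTop (hα : α ∈ Set.Ioo (0:ℝ) 1) (hσ : 0 < σ) (hm : 0 < m)
    (hgcont : Continuous g) (hgnn : ∀ θ, 0 ≤ g θ)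
    (hgpos : ∀ θ ∈ Set.Ioo (-m) m, 0 < g θ)
    (hgsupp : ∀ θ, θ ∉ Set.Icc (-m) m → g θ = 0) (hgint : ∫ θ, g θ = 1) :
    Filter.Tendsto (postMean α σ g) Filter.atTop (nhds m) := by
  obtain ⟨hα0, hα1⟩ := hα
  have h1α : 0 < 1 - α := by linarith
  have hσ' : 0 < 1 / σ := by positivity
  have KI : ∀ f : ℝ → ℝ, Continuous f → Integrable (fun θ => g θ * f θ) :=
    fun f hf => integrable_g_mul hgcont hgsupp hf
  have hgI : Integrable g := by
    simpa using KI (fun _ => (1:ℝ)) continuous_const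
  have hform : ∀ d : ℝ, postMean α σ g d =
      ((1 - α) * ∫ θ, g θ * (θ * ((1 / σ) * phi ((d - θ) / σ)))) /
        (α * ((1 / σ) * phi (d / σ)) +
          (1 - α) * ∫ θ, g θ * ((1 / σ) * phi ((d - θ) / σ))) :=
    fun d => postMean_formula hα0.le hα1.le hσ hgcont hgnn hgsupp d
  have hKcont : ∀ d : ℝ, Continuous fun θ : ℝ => (1 / σ) * phi ((d - θ) / σ) := fun d =>
    continuous_const.mul (phi_continuous.comp ((continuous_const.sub continuous_id).div_const σ))
  have hKpos : ∀ d θ : ℝ, 0 < (1 / σ) * phi ((d - θ) / σ) := fun d θ =>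
    mul_pos hσ' (phi_pos _)
  have hDpos : ∀ d : ℝ, 0 < α * ((1 / σ) * phi (d / σ)) +
      (1 - α) * ∫ θ, g θ * ((1 / σ) * phi ((d - θ) / σ)) := by
    intro d
    have h1 : 0 < α * ((1 / σ) * phi (d / σ)) := mul_pos hα0 (mul_pos hσ' (phi_pos _))
    have h2 : 0 ≤ ∫ θ, g θ * ((1 / σ) * phi ((d - θ) / σ)) :=
      integral_nonneg fun θ => mul_nonneg (hgnn θ) (hKpos d θ).le
    nlinarith
  have hub : ∀ d : ℝ, postMean α σ g d ≤ m := by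
    intro d
    rw [hform d, div_le_iff₀ (hDpos d)]
    have hmono : ∫ θ, g θ * (θ * ((1 / σ) * phi ((d - θ) / σ))) ≤
        ∫ θ, g θ * (m * ((1 / σ) * phi ((d - θ) / σ))) := by
      apply integral_mono (KI _ (continuous_id.mul (hKcont d)))
        (KI _ (continuous_const.mul (hKcont d)))
      intro θ
      rcases eq_or_lt_of_le (hgnn θ) with h | h
      · simp [← h]
      · have hθm : θ ≤ m := by
          by_contra hc
          push_neg at hc
          have : g θ = 0 := hgsupp θ (fun hmem => absurd hmem.2 (not_le.2 hc))
          linarith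
        have hk : 0 ≤ (1 / σ) * phi ((d - θ) / σ) := (hKpos d θ).le
        exact mul_le_mul_of_nonneg_left
          (mul_le_mul_of_nonneg_right hθm hk) h.le
    have heq : ∫ θ, g θ * (m * ((1 / σ) * phi ((d - θ) / σ))) =
        m * ∫ θ, g θ * ((1 / σ) * phi ((d - θ) / σ)) := by
      rw [← integral_const_mul]
      congr 1; funext θ; ring
    rw [heq] at hmono
    have hscaled := mul_le_mul_of_nonneg_left hmono h1α.le
    have hpos : 0 ≤ m * (α * ((1 / σ) * phi (d / σ))) :=
      mul_nonneg hm.le (mul_nonneg hα0.le (mul_nonneg hσ'.le (phi_pos _).le))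
    linarith [hscaled, hpos]
  rw [Metric.tendsto_nhds]
  intro ε hε
  set e := min (ε / 2) m with hedef
  have he0 : 0 < e := lt_min (by linarith) hm
  have heε : e ≤ ε / 2 := min_le_left _ _
  have hem : e ≤ m := min_le_right _ _
  have hlow : m - e / 2 < m := by linarith
  have hc : 0 < ∫ θ in Set.Icc (m - e / 2) m, g θ := by
    rw [MeasureTheory.integral_Icc_eq_integral_Ioc, ← intervalIntegral.integral_of_le hlow.le]
    apply intervalIntegral.intervalIntegral_pos_of_pos_on
      (hgcont.intervalIntegrable _ _)
    · intro x hx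
      apply hgpos
      refine ⟨?_, hx.2⟩
      have : m - e / 2 ≥ m / 2 := by linarith
      nlinarith [hx.1]
    · exact hlow
  set c := ∫ θ in Set.Icc (m - e / 2) m, g θ with hcdef
  have hCs : 0 < (1 - α) * (e / 2) * c := by positivity
  have hCb : 0 < (1 - α) * 2 * m + α * m := by nlinarith
  have hratio := ratio_lim hσ (show m - e < m - e / 2 by linarith)
  have hevr : ∀ᶠ d in Filter.atTop,
      ((1 - α) * 2 * m + α * m) * phi ((d - (m - e)) / σ) ≤
        ((1 - α) * (e / 2) * c) * phi ((d - (m - e / 2)) / σ) := by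
    have h2 : ∀ᶠ d in Filter.atTop,
        phi ((d - (m - e)) / σ) / phi ((d - (m - e / 2)) / σ) <
          ((1 - α) * (e / 2) * c) / ((1 - α) * 2 * m + α * m) :=
      hratio.eventually (gt_mem_nhds (by positivity))
    filter_upwards [h2] with d hd
    have hp : 0 < phi ((d - (m - e / 2)) / σ) := phi_pos _
    rw [div_lt_div_iff₀ hp hCb] at hd
    nlinarith
  filter_upwards [hevr, Filter.eventually_ge_atTop m] with d hrd hd
  -- lower bound
  have hlb : m - e ≤ postMean α σ g d := by
    rw [hform d, le_div_iff₀ (hDpos d)]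
    set K1 := (1 / σ) * phi ((d - (m - e / 2)) / σ) with hK1def
    set K2 := (1 / σ) * phi ((d - (m - e)) / σ) with hK2def
    have hK1nn : 0 ≤ K1 := (hKpos d _).le
    have hK2nn : 0 ≤ K2 := (hKpos d _).le
    have hFcont : Continuous fun θ : ℝ =>
        (θ - (m - e)) * ((1 / σ) * phi ((d - θ) / σ)) :=
      (continuous_id.sub continuous_const).mul (hKcont d)
    have hFI : Integrable (fun θ => g θ * ((θ - (m - e)) * ((1 / σ) * phi ((d - θ) / σ)))) :=
      KI _ hFcont
    have hsplit : ∫ θ, g θ * ((θ - (m - e)) * ((1 / σ) * phi ((d - θ) / σ))) =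
        (∫ θ in Set.Iio (m - e), g θ * ((θ - (m - e)) * ((1 / σ) * phi ((d - θ) / σ)))) +
        ∫ θ in (Set.Iio (m - e))ᶜ, g θ * ((θ - (m - e)) * ((1 / σ) * phi ((d - θ) / σ))) :=
      (integral_add_compl measurableSet_Iio hFI).symm
    have hT : -(2 * m * K2) ≤
        ∫ θ in Set.Iio (m - e), g θ * ((θ - (m - e)) * ((1 / σ) * phi ((d - θ) / σ))) := by
      have hpt : ∀ θ ∈ Set.Iio (m - e), g θ * (-(2 * m) * K2) ≤
          g θ * ((θ - (m - e)) * ((1 / σ) * phi ((d - θ) / σ))) := by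
        intro θ hθ
        rw [Set.mem_Iio] at hθ
        rcases eq_or_lt_of_le (hgnn θ) with h | h
        · simp [← h]
        · have hmem : θ ∈ Set.Icc (-m) m := by
            by_contra hcon
            rw [hgsupp θ hcon] at h
            exact lt_irrefl 0 h
          have hKle : (1 / σ) * phi ((d - θ) / σ) ≤ K2 := by
            rw [hK2def]
            apply mul_le_mul_of_nonneg_left _ hσ'.le
            apply phi_anti (div_nonneg (by linarith) hσ.le)
            gcongr <;> linarith
          have h1 : -(2 * m) * K2 ≤ -(2 * m) * ((1 / σ) * phi ((d - θ) / σ)) :=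
            mul_le_mul_of_nonpos_left hKle (by linarith)
          have h2 : -(2 * m) * ((1 / σ) * phi ((d - θ) / σ)) ≤
              (θ - (m - e)) * ((1 / σ) * phi ((d - θ) / σ)) :=
            mul_le_mul_of_nonneg_right (by linarith [hmem.1]) (hKpos d θ).le
          exact mul_le_mul_of_nonneg_left (h1.trans h2) h.le
      have h1 : ∫ θ in Set.Iio (m - e), g θ * (-(2 * m) * K2) ≤
          ∫ θ in Set.Iio (m - e), g θ * ((θ - (m - e)) * ((1 / σ) * phi ((d - θ) / σ))) :=
        setIntegral_mono_on ((hgI.mul_const _).integrableOn) hFI.integrableOn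
          measurableSet_Iio hpt
      have h2 : ∫ θ in Set.Iio (m - e), g θ * (-(2 * m) * K2) =
          (∫ θ in Set.Iio (m - e), g θ) * (-(2 * m) * K2) := by
        exact integral_mul_const _ _
      have h3 : ∫ θ in Set.Iio (m - e), g θ ≤ 1 := by
        rw [← hgint]
        exact setIntegral_le_integral hgI (Filter.Eventually.of_forall hgnn)
      have h4 : 0 ≤ ∫ θ in Set.Iio (m - e), g θ :=
        setIntegral_nonneg measurableSet_Iio fun θ _ => hgnn θ
      have hprod : 0 ≤ (1 - ∫ θ in Set.Iio (m - e), g θ) * (2 * m * K2) :=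
        mul_nonneg (by linarith) (mul_nonneg (by linarith) hK2nn)
      nlinarith [h1, h2, hprod]
    have hTc : e / 2 * K1 * c ≤
        ∫ θ in (Set.Iio (m - e))ᶜ, g θ * ((θ - (m - e)) * ((1 / σ) * phi ((d - θ) / σ))) := by
      have hSsub : Set.Icc (m - e / 2) m ⊆ (Set.Iio (m - e))ᶜ := by
        intro θ hθ
        rw [Set.mem_compl_iff, Set.mem_Iio, not_lt]
        linarith [hθ.1]
      have hnonneg : ∀ θ ∈ (Set.Iio (m - e))ᶜ,
          0 ≤ g θ * ((θ - (m - e)) * ((1 / σ) * phi ((d - θ) / σ))) := by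
        intro θ hθ
        rw [Set.mem_compl_iff, Set.mem_Iio, not_lt] at hθ
        exact mul_nonneg (hgnn θ) (mul_nonneg (by linarith) (hKpos d θ).le)
      have h1 : ∫ θ in Set.Icc (m - e / 2) m,
            g θ * ((θ - (m - e)) * ((1 / σ) * phi ((d - θ) / σ))) ≤
          ∫ θ in (Set.Iio (m - e))ᶜ,
            g θ * ((θ - (m - e)) * ((1 / σ) * phi ((d - θ) / σ))) :=
        setIntegral_mono_set hFI.integrableOn
          ((ae_restrict_iff' measurableSet_Iio.compl).2 (Filter.Eventually.of_forall hnonneg))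
          (HasSubset.Subset.eventuallyLE hSsub)
      have hpt2 : ∀ θ ∈ Set.Icc (m - e / 2) m, g θ * (e / 2 * K1) ≤
          g θ * ((θ - (m - e)) * ((1 / σ) * phi ((d - θ) / σ))) := by
        intro θ hθ
        apply mul_le_mul_of_nonneg_left _ (hgnn θ)
        have hK1le : K1 ≤ (1 / σ) * phi ((d - θ) / σ) := by
          rw [hK1def]
          apply mul_le_mul_of_nonneg_left _ hσ'.le
          apply phi_anti (div_nonneg (by linarith [hθ.2]) hσ.le)
          gcongr <;> linarith [hθ.1, hθ.2]
        exact mul_le_mul (by linarith [hθ.1]) hK1le hK1nn (by linarith [hθ.1])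
      have h2 : ∫ θ in Set.Icc (m - e / 2) m, g θ * (e / 2 * K1) ≤
          ∫ θ in Set.Icc (m - e / 2) m,
            g θ * ((θ - (m - e)) * ((1 / σ) * phi ((d - θ) / σ))) :=
        setIntegral_mono_on ((hgI.mul_const _).integrableOn) hFI.integrableOn
          measurableSet_Icc hpt2
      have h3 : ∫ θ in Set.Icc (m - e / 2) m, g θ * (e / 2 * K1) = c * (e / 2 * K1) := by
        rw [hcdef]
        exact integral_mul_const _ _
      linarith [h1, h2, h3]
    have hatom : α * (m - e) * ((1 / σ) * phi (d / σ)) ≤ α * m * K2 := by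
      have hphi : phi (d / σ) ≤ phi ((d - (m - e)) / σ) := by
        apply phi_anti (div_nonneg (by linarith) hσ.le)
        gcongr <;> linarith
      have h1 : α * (m - e) ≤ α * m := by nlinarith
      have h2 : (1 / σ) * phi (d / σ) ≤ K2 := by
        rw [hK2def]
        exact mul_le_mul_of_nonneg_left hphi hσ'.le
      exact mul_le_mul h1 h2 (mul_nonneg hσ'.le (phi_pos _).le)
        (mul_nonneg hα0.le hm.le)
    have hI' : ∫ θ, g θ * ((θ - (m - e)) * ((1 / σ) * phi ((d - θ) / σ))) =
        (∫ θ, g θ * (θ * ((1 / σ) * phi ((d - θ) / σ)))) -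
          (m - e) * ∫ θ, g θ * ((1 / σ) * phi ((d - θ) / σ)) := by
      have i1 : Integrable (fun θ => g θ * (θ * ((1 / σ) * phi ((d - θ) / σ)))) :=
        KI _ (continuous_id.mul (hKcont d))
      have i2 : Integrable (fun θ => (m - e) * (g θ * ((1 / σ) * phi ((d - θ) / σ)))) :=
        (KI _ (hKcont d)).const_mul _
      calc ∫ θ, g θ * ((θ - (m - e)) * ((1 / σ) * phi ((d - θ) / σ)))
          = ∫ θ, (g θ * (θ * ((1 / σ) * phi ((d - θ) / σ))) -
              (m - e) * (g θ * ((1 / σ) * phi ((d - θ) / σ)))) := by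
            congr 1; funext θ; ring
        _ = (∫ θ, g θ * (θ * ((1 / σ) * phi ((d - θ) / σ)))) -
              ∫ θ, (m - e) * (g θ * ((1 / σ) * phi ((d - θ) / σ))) := integral_sub i1 i2
        _ = (∫ θ, g θ * (θ * ((1 / σ) * phi ((d - θ) / σ)))) -
              (m - e) * ∫ θ, g θ * ((1 / σ) * phi ((d - θ) / σ)) := by
            rw [integral_const_mul]
    have hItot : e / 2 * K1 * c - 2 * m * K2 ≤
        ∫ θ, g θ * ((θ - (m - e)) * ((1 / σ) * phi ((d - θ) / σ))) := by
      rw [hsplit]; linarith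
    have hrd' : ((1 - α) * 2 * m + α * m) * K2 ≤ ((1 - α) * (e / 2) * c) * K1 := by
      rw [hK1def, hK2def]
      have := mul_le_mul_of_nonneg_right hrd hσ'.le
      linarith [this]
    have step1 : (1 - α) * (e / 2 * K1 * c - 2 * m * K2) ≤
        (1 - α) * ∫ θ, g θ * ((θ - (m - e)) * ((1 / σ) * phi ((d - θ) / σ))) :=
      mul_le_mul_of_nonneg_left hItot h1α.le
    have key : α * (m - e) * ((1 / σ) * phi (d / σ)) ≤
        (1 - α) * ∫ θ, g θ * ((θ - (m - e)) * ((1 / σ) * phi ((d - θ) / σ))) := by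
      linarith [step1, hrd', hatom]
    have hIscaled : (1 - α) * ∫ θ, g θ * ((θ - (m - e)) * ((1 / σ) * phi ((d - θ) / σ))) =
        (1 - α) * (∫ θ, g θ * (θ * ((1 / σ) * phi ((d - θ) / σ)))) -
          (1 - α) * ((m - e) * ∫ θ, g θ * ((1 / σ) * phi ((d - θ) / σ))) := by
      rw [hI']; ring
    linarith [key, hIscaled]
  have hub' := hub d
  rw [Real.dist_eq, abs_lt]
  constructor <;> linarith

set_option maxHeartbeats 1000000 in
theorem postMean_limits (α σ m : ℝ) (hα : α ∈ Set.Ioo (0:ℝ) 1) (hσ : 0 < σ) (hm : 0 < m)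
    (g : ℝ → ℝ) (hgcont : Continuous g) (hgnn : ∀ θ, 0 ≤ g θ)
    (hgpos : ∀ θ ∈ Set.Ioo (-m) m, 0 < g θ)
    (hgsupp : ∀ θ, θ ∉ Set.Icc (-m) m → g θ = 0) (hgint : ∫ θ, g θ = 1) :
    Filter.Tendsto (postMean α σ g) Filter.atTop (nhds m) ∧
      Filter.Tendsto (postMean α σ g) Filter.atBot (nhds (-m)) := by
  refine ⟨aux_atTop hα hσ hm hgcont hgnn hgpos hgsupp hgint, ?_⟩
  have hg'cont : Continuous fun θ => g (-θ) := hgcont.comp continuous_neg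
  have hg'nn : ∀ θ, 0 ≤ g (-θ) := fun θ => hgnn _
  have hg'pos : ∀ θ ∈ Set.Ioo (-m) m, 0 < g (-θ) := by
    intro θ hθ
    exact hgpos _ ⟨by linarith [hθ.2], by linarith [hθ.1]⟩
  have hg'supp : ∀ θ, θ ∉ Set.Icc (-m) m → g (-θ) = 0 := by
    intro θ hθ
    apply hgsupp
    intro hmem
    exact hθ ⟨by linarith [hmem.2], by linarith [hmem.1]⟩
  have hg'int : ∫ θ, g (-θ) = 1 := by
    rw [integral_neg_eq_self]; exact hgint
  have hA := aux_atTop hα hσ hm hg'cont hg'nn hg'pos hg'supp hg'int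
  obtain ⟨hα0, hα1⟩ := hα
  have hrefl : ∀ d : ℝ, postMean α σ g d = - postMean α σ (fun θ => g (-θ)) (-d) := by
    intro d
    rw [postMean_formula hα0.le hα1.le hσ hgcont hgnn hgsupp d,
        postMean_formula (m := m) hα0.le hα1.le hσ hg'cont hg'nn hg'supp (-d)]
    have hnum : ∫ θ, g θ * (θ * ((1 / σ) * phi ((d - θ) / σ))) =
        - ∫ θ, g (-θ) * (θ * ((1 / σ) * phi ((-d - θ) / σ))) := by
      rw [← integral_neg_eq_self (fun θ => g θ * (θ * ((1 / σ) * phi ((d - θ) / σ)))) volume,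
        ← integral_neg]
      congr 1; funext θ
      have : phi ((d + θ) / σ) = phi ((-d - θ) / σ) := by
        rw [show (-d - θ) / σ = -((d + θ) / σ) by ring, phi_even]
      simp only [sub_neg_eq_add]
      rw [this]; ring
    have hden : ∫ θ, g θ * ((1 / σ) * phi ((d - θ) / σ)) =
        ∫ θ, g (-θ) * ((1 / σ) * phi ((-d - θ) / σ)) := by
      rw [← integral_neg_eq_self (fun θ => g θ * ((1 / σ) * phi ((d - θ) / σ))) volume]
      congr 1; funext θ
      have : phi ((d + θ) / σ) = phi ((-d - θ) / σ) := by
        rw [show (-d - θ) / σ = -((d + θ) / σ) by ring, phi_even]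
      simp only [sub_neg_eq_add]
      rw [this]
    have hphi0 : phi (d / σ) = phi (-d / σ) := by
      rw [show (-d / σ) = -(d / σ) by ring, phi_even]
    rw [hnum, hden, hphi0]
    ring
  have htendsto : Filter.Tendsto (fun d => postMean α σ (fun θ => g (-θ)) (-d))
      Filter.atBot (nhds m) := hA.comp Filter.tendsto_neg_atBot_atTop
  have := htendsto.neg
  apply this.congr
  intro d
  exact (hrefl d).symm
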